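/- arXiv:2605.21664 — 12 statements merged into one kernel-verified Lean document; each statement's English description precedes it below -/
import Mathlib

section
/- Power sums on an interval determine the spectrum: let p, q : Fin d → ℝ be probability vectors such that ∑ i, (p i) ^ α = ∑ i, (q i) ^ α for every α in the open interval (0, 2) (real powers, with 0 ^ α = 0 for α > 0). Then q is a permutation of p: there exists σ : Equiv.Perm (Fin d) with q i = p (σ i) for all i. -/
open Finset Multiset

/-- If `a ∈ M` and the rpow-sums of `M` are dominated by those of `N` (all entries positive,
entries of `N` bounded by `b > 0`), then `a ≤ b`. -/
lemma psds_max_le {M N : Multiset ℝ} (hM : ∀ x ∈ M, 0 < x) (hN : ∀ x ∈ N, 0 < x)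
    (h : ∀ α : ℝ, 0 < α → (M.map (fun x => x ^ α)).sum ≤ (N.map (fun x => x ^ α)).sum)
    {a b : ℝ} (ha : a ∈ M) (hb : ∀ y ∈ N, y ≤ b) (hb0 : 0 < b) : a ≤ b := by
  by_contra hab
  push_neg at hab
  have ha0 : 0 < a := hM a ha
  have hba : (1 : ℝ) < a / b := (one_lt_div hb0).2 hab
  obtain ⟨n, hn⟩ := pow_unbounded_of_one_lt (Multiset.card N : ℝ) hba
  set α : ℝ := ((n + 1 : ℕ) : ℝ) with hα
  have hαpos : (0 : ℝ) < α := by positivity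
  have key := h α hαpos
  have hMsum : a ^ α ≤ (M.map (fun x => x ^ α)).sum := by
    refine Multiset.single_le_sum ?_ _ (Multiset.mem_map_of_mem _ ha)
    intro x hx
    obtain ⟨y, hy, rfl⟩ := Multiset.mem_map.1 hx
    exact Real.rpow_nonneg (hM y hy).le _
  have hNsum : (N.map (fun x => x ^ α)).sum ≤ (Multiset.card N : ℝ) * b ^ α := by
    have := Multiset.sum_le_card_nsmul (N.map (fun x => x ^ α)) (b ^ α) ?_
    · simpa [nsmul_eq_mul] using this
    · intro x hx
      obtain ⟨y, hy, rfl⟩ := Multiset.mem_map.1 hx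
      exact Real.rpow_le_rpow (hN y hy).le (hb y hy) hαpos.le
  have hlt : (Multiset.card N : ℝ) * b ^ α < a ^ α := by
    have hpow : (Multiset.card N : ℝ) < (a / b) ^ α := by
      rw [hα, Real.rpow_natCast]
      calc (Multiset.card N : ℝ) < (a / b) ^ n := hn
        _ ≤ (a / b) ^ (n + 1) := pow_le_pow_right₀ hba.le (Nat.le_succ n)
    have hbα : (0 : ℝ) < b ^ α := Real.rpow_pos_of_pos hb0 _
    rw [Real.div_rpow ha0.le hb0.le] at hpow
    calc (Multiset.card N : ℝ) * b ^ α < (a ^ α / b ^ α) * b ^ α := by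
          exact mul_lt_mul_of_pos_right hpow hbα
      _ = a ^ α := by field_simp
  linarith

/-- Equal rpow-sums for all positive α imply equal multisets of positive reals. -/
lemma psds_multiset_eq : ∀ n : ℕ, ∀ M N : Multiset ℝ, Multiset.card M ≤ n →
    (∀ x ∈ M, 0 < x) → (∀ x ∈ N, 0 < x) →
    (∀ α : ℝ, 0 < α → (M.map (fun x => x ^ α)).sum = (N.map (fun x => x ^ α)).sum) →
    M = N := by
  intro n
  induction n with
  | zero =>
    intro M N hcard hM hN h
    have hM0 : M = 0 := Multiset.card_eq_zero.1 (Nat.le_zero.1 hcard)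
    subst hM0
    by_contra hN0
    obtain ⟨y, hy⟩ := Multiset.exists_mem_of_ne_zero (fun h0 => hN0 h0.symm)
    have h1 := h 1 one_pos
    have : y ^ (1 : ℝ) ≤ (N.map (fun x => x ^ (1:ℝ))).sum := by
      refine Multiset.single_le_sum ?_ _ (Multiset.mem_map_of_mem _ hy)
      intro x hx
      obtain ⟨z, hz, rfl⟩ := Multiset.mem_map.1 hx
      exact Real.rpow_nonneg (hN z hz).le _
    rw [Real.rpow_one] at this
    simp only [Multiset.map_zero, Multiset.sum_zero] at h1
    have := hN y hy
    linarith
  | succ n ih =>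
    intro M N hcard hM hN h
    rcases eq_or_ne M 0 with rfl | hM0
    · exact ih 0 N (Nat.zero_le _) hM hN h
    rcases eq_or_ne N 0 with rfl | hN0
    · exact (ih 0 M (Nat.zero_le _) hN hM (fun α hα => (h α hα).symm)).symm
    have hMt : M.toFinset.Nonempty := by
      obtain ⟨x, hx⟩ := Multiset.exists_mem_of_ne_zero hM0
      exact ⟨x, Multiset.mem_toFinset.2 hx⟩
    have hNt : N.toFinset.Nonempty := by
      obtain ⟨x, hx⟩ := Multiset.exists_mem_of_ne_zero hN0
      exact ⟨x, Multiset.mem_toFinset.2 hx⟩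
    set a := M.toFinset.max' hMt with hadef
    set b := N.toFinset.max' hNt with hbdef
    have haM : a ∈ M := Multiset.mem_toFinset.1 (M.toFinset.max'_mem hMt)
    have hbN : b ∈ N := Multiset.mem_toFinset.1 (N.toFinset.max'_mem hNt)
    have hab : a = b := by
      have h1 : a ≤ b := psds_max_le hM hN (fun α hα => (h α hα).le) haM
        (fun y hy => N.toFinset.le_max' y (Multiset.mem_toFinset.2 hy)) (hN b hbN)
      have h2 : b ≤ a := psds_max_le hN hM (fun α hα => (h α hα).ge) hbN
        (fun y hy => M.toFinset.le_max' y (Multiset.mem_toFinset.2 hy)) (hM a haM)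
      linarith
    rw [← hab] at hbN
    have hMc : M = a ::ₘ M.erase a := (Multiset.cons_erase haM).symm
    have hNc : N = a ::ₘ N.erase a := (Multiset.cons_erase hbN).symm
    have herase : M.erase a = N.erase a := by
      refine ih (M.erase a) (N.erase a) ?_ (fun x hx => hM x (Multiset.mem_of_mem_erase hx))
        (fun x hx => hN x (Multiset.mem_of_mem_erase hx)) ?_
      · have : Multiset.card M = Multiset.card (M.erase a) + 1 := by
          rw [hMc]; simp
        omega
      · intro α hα
        have := h α hα
        rw [hMc, hNc] at this
        simp only [Multiset.map_cons, Multiset.sum_cons] at this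
        linarith
    rw [hMc, hNc, herase]

/-- A finite sum of exponentials of linear functions is analytic on ℝ. -/
lemma psds_analytic {ι : Type*} (s : Finset ι) (c : ι → ℝ) :
    AnalyticOnNhd ℝ (fun α : ℝ => ∑ i ∈ s, Real.exp (α * c i)) Set.univ := by
  intro x _
  apply Finset.analyticAt_fun_sum
  intro i _
  exact ((analyticAt_id).mul analyticAt_const).rexp

/-- Power sums on the interval `(0, 2)` determine the spectrum. -/
theorem power_sums_determine_spectrum {d : ℕ} (p q : Fin d → ℝ)
    (hp0 : ∀ i, 0 ≤ p i) (hp1 : ∑ i, p i = 1)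
    (hq0 : ∀ i, 0 ≤ q i) (hq1 : ∑ i, q i = 1)
    (hpow : ∀ α : ℝ, 0 < α → α < 2 → ∑ i, (p i) ^ α = ∑ i, (q i) ^ α) :
    ∃ σ : Equiv.Perm (Fin d), ∀ i, q i = p (σ i) := by
  classical
  -- step 1 : rewrite power sums as sums of exponentials over positive entries
  set Sp : Finset (Fin d) := Finset.univ.filter (fun i => p i ≠ 0) with hSp
  set Sq : Finset (Fin d) := Finset.univ.filter (fun i => q i ≠ 0) with hSq
  have hsum_p : ∀ α : ℝ, 0 < α →
      ∑ i, (p i) ^ α = ∑ i ∈ Sp, Real.exp (α * Real.log (p i)) := by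
    intro α hα
    rw [← Finset.sum_filter_add_sum_filter_not Finset.univ (fun i => p i ≠ 0)]
    have h2 : ∑ i ∈ Finset.univ.filter (fun i => ¬ p i ≠ 0), (p i) ^ α = 0 := by
      refine Finset.sum_eq_zero fun i hi => ?_
      simp only [Finset.mem_filter, not_not] at hi
      rw [hi.2, Real.zero_rpow hα.ne']
    rw [h2, add_zero]
    refine Finset.sum_congr rfl fun i hi => ?_
    simp only [hSp, Finset.mem_filter] at hi
    have hpi : 0 < p i := lt_of_le_of_ne (hp0 i) (Ne.symm hi.2)
    rw [Real.rpow_def_of_pos hpi, mul_comm]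
  have hsum_q : ∀ α : ℝ, 0 < α →
      ∑ i, (q i) ^ α = ∑ i ∈ Sq, Real.exp (α * Real.log (q i)) := by
    intro α hα
    rw [← Finset.sum_filter_add_sum_filter_not Finset.univ (fun i => q i ≠ 0)]
    have h2 : ∑ i ∈ Finset.univ.filter (fun i => ¬ q i ≠ 0), (q i) ^ α = 0 := by
      refine Finset.sum_eq_zero fun i hi => ?_
      simp only [Finset.mem_filter, not_not] at hi
      rw [hi.2, Real.zero_rpow hα.ne']
    rw [h2, add_zero]
    refine Finset.sum_congr rfl fun i hi => ?_
    simp only [hSq, Finset.mem_filter] at hi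
    have hqi : 0 < q i := lt_of_le_of_ne (hq0 i) (Ne.symm hi.2)
    rw [Real.rpow_def_of_pos hqi, mul_comm]
  -- step 2 : analytic continuation to all α > 0
  have hF : AnalyticOnNhd ℝ (fun α : ℝ => ∑ i ∈ Sp, Real.exp (α * Real.log (p i)))
      Set.univ := psds_analytic Sp _
  have hG : AnalyticOnNhd ℝ (fun α : ℝ => ∑ i ∈ Sq, Real.exp (α * Real.log (q i)))
      Set.univ := psds_analytic Sq _
  have heq : Set.EqOn (fun α : ℝ => ∑ i ∈ Sp, Real.exp (α * Real.log (p i)))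
      (fun α : ℝ => ∑ i ∈ Sq, Real.exp (α * Real.log (q i))) Set.univ := by
    apply hF.eqOn_of_preconnected_of_eventuallyEq hG isPreconnected_univ
      (Set.mem_univ (1 : ℝ))
    have hmem : Set.Ioo (0 : ℝ) 2 ∈ nhds (1 : ℝ) :=
      Ioo_mem_nhds one_pos one_lt_two
    refine Filter.eventuallyEq_of_mem hmem fun α hα => ?_
    have := hpow α hα.1 hα.2
    rw [hsum_p α hα.1, hsum_q α hα.1] at this
    exact this
  have hall : ∀ α : ℝ, 0 < α → ∑ i, (p i) ^ α = ∑ i, (q i) ^ α := by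
    intro α hα
    rw [hsum_p α hα, hsum_q α hα]
    exact heq (Set.mem_univ α)
  -- step 3 : multisets of positive entries are equal
  set M : Multiset ℝ := (Finset.univ.val.map p).filter (fun x => 0 < x) with hMdef
  set N : Multiset ℝ := (Finset.univ.val.map q).filter (fun x => 0 < x) with hNdef
  have hsumM : ∀ α : ℝ, 0 < α → (M.map (fun x => x ^ α)).sum = ∑ i, (p i) ^ α := by
    intro α hα
    have hsplit : (((Finset.univ.val.map p).filter (fun x => 0 < x)).map
          (fun x => x ^ α)).sum
        + (((Finset.univ.val.map p).filter (fun x => ¬ 0 < x)).map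
          (fun x => x ^ α)).sum
        = ((Finset.univ.val.map p).map (fun x => x ^ α)).sum := by
      rw [← Multiset.sum_add, ← Multiset.map_add, Multiset.filter_add_not]
    have hzero : (((Finset.univ.val.map p).filter (fun x => ¬ 0 < x)).map
        (fun x => x ^ α)).sum = 0 := by
      refine Multiset.sum_eq_zero fun x hx => ?_
      obtain ⟨y, hy, rfl⟩ := Multiset.mem_map.1 hx
      have hy' := Multiset.mem_filter.1 hy
      obtain ⟨i, _, rfl⟩ := Multiset.mem_map.1 hy'.1
      have : p i = 0 := le_antisymm (not_lt.1 hy'.2) (hp0 i)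
      rw [this, Real.zero_rpow hα.ne']
    have : ((Finset.univ.val.map p).map (fun x => x ^ α)).sum = ∑ i, (p i) ^ α := by
      rw [Multiset.map_map]
      rfl
    rw [← this, ← hsplit, hzero, add_zero]
  have hsumN : ∀ α : ℝ, 0 < α → (N.map (fun x => x ^ α)).sum = ∑ i, (q i) ^ α := by
    intro α hα
    have hsplit : (((Finset.univ.val.map q).filter (fun x => 0 < x)).map
          (fun x => x ^ α)).sum
        + (((Finset.univ.val.map q).filter (fun x => ¬ 0 < x)).map
          (fun x => x ^ α)).sum
        = ((Finset.univ.val.map q).map (fun x => x ^ α)).sum := by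
      rw [← Multiset.sum_add, ← Multiset.map_add, Multiset.filter_add_not]
    have hzero : (((Finset.univ.val.map q).filter (fun x => ¬ 0 < x)).map
        (fun x => x ^ α)).sum = 0 := by
      refine Multiset.sum_eq_zero fun x hx => ?_
      obtain ⟨y, hy, rfl⟩ := Multiset.mem_map.1 hx
      have hy' := Multiset.mem_filter.1 hy
      obtain ⟨i, _, rfl⟩ := Multiset.mem_map.1 hy'.1
      have : q i = 0 := le_antisymm (not_lt.1 hy'.2) (hq0 i)
      rw [this, Real.zero_rpow hα.ne']
    have : ((Finset.univ.val.map q).map (fun x => x ^ α)).sum = ∑ i, (q i) ^ α := by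
      rw [Multiset.map_map]
      rfl
    rw [← this, ← hsplit, hzero, add_zero]
  have hMN : M = N := by
    refine psds_multiset_eq (Multiset.card M) M N le_rfl ?_ ?_ ?_
    · intro x hx; exact (Multiset.mem_filter.1 hx).2
    · intro x hx; exact (Multiset.mem_filter.1 hx).2
    · intro α hα; rw [hsumM α hα, hsumN α hα]; exact hall α hα
  -- step 4 : full multisets are equal
  have hfull : Finset.univ.val.map p = Finset.univ.val.map q := by
    have hp' : (Finset.univ.val.map p).filter (fun x => ¬ 0 < x)
        = Multiset.replicate (d - Multiset.card M) 0 := by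
      rw [Multiset.eq_replicate]
      constructor
      · have := Multiset.filter_add_not (fun x => 0 < x) (Finset.univ.val.map p)
        have hc := congrArg Multiset.card this
        rw [Multiset.card_add] at hc
        simp only [Multiset.card_map, Finset.card_val, Finset.card_univ,
          Fintype.card_fin] at hc
        rw [← hMdef] at hc
        omega
      · intro b hb
        have hb' := Multiset.mem_filter.1 hb
        obtain ⟨i, _, rfl⟩ := Multiset.mem_map.1 hb'.1
        exact le_antisymm (not_lt.1 hb'.2) (hp0 i)
    have hq' : (Finset.univ.val.map q).filter (fun x => ¬ 0 < x)
        = Multiset.replicate (d - Multiset.card M) 0 := by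
      rw [Multiset.eq_replicate]
      constructor
      · have := Multiset.filter_add_not (fun x => 0 < x) (Finset.univ.val.map q)
        have hc := congrArg Multiset.card this
        rw [Multiset.card_add] at hc
        simp only [Multiset.card_map, Finset.card_val, Finset.card_univ,
          Fintype.card_fin] at hc
        rw [← hNdef, ← hMN] at hc
        omega
      · intro b hb
        have hb' := Multiset.mem_filter.1 hb
        obtain ⟨i, _, rfl⟩ := Multiset.mem_map.1 hb'.1
        exact le_antisymm (not_lt.1 hb'.2) (hq0 i)
    calc Finset.univ.val.map p
        = (Finset.univ.val.map p).filter (fun x => 0 < x)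
          + (Finset.univ.val.map p).filter (fun x => ¬ 0 < x) :=
          (Multiset.filter_add_not _ _).symm
      _ = (Finset.univ.val.map q).filter (fun x => 0 < x)
          + (Finset.univ.val.map q).filter (fun x => ¬ 0 < x) := by
          rw [← hMdef, ← hNdef, hMN, hp', hq']
      _ = Finset.univ.val.map q := Multiset.filter_add_not _ _
  -- step 5 : build the permutation from fiber cardinalities
  have hcards : ∀ b : ℝ, Fintype.card {i : Fin d // q i = b}
      = Fintype.card {i : Fin d // p i = b} := by
    intro b
    have hcount := congrArg (Multiset.count b) hfull
    rw [Multiset.count_map, Multiset.count_map] at hcount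
    rw [Fintype.card_subtype, Fintype.card_subtype]
    have key : ∀ f : Fin d → ℝ, (Finset.univ.filter (fun i => f i = b)).card
        = Multiset.card (Multiset.filter (fun a => b = f a) Finset.univ.val) := by
      intro f
      rw [Finset.card, Finset.filter_val]
      congr 1
      apply Multiset.filter_congr
      intro x _
      exact eq_comm
    rw [key p, key q]
    exact hcount.symm
  let e : ∀ b : ℝ, {i : Fin d // q i = b} ≃ {i : Fin d // p i = b} :=
    fun b => Fintype.equivOfCardEq (hcards b)
  refine ⟨(Equiv.sigmaFiberEquiv q).symm.trans
    ((Equiv.sigmaCongrRight e).trans (Equiv.sigmaFiberEquiv p)), fun i => ?_⟩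
  exact ((e (q i)) ⟨i, rfl⟩).2.symm
end

section
/- Rank obstruction on a fixed iso-purity manifold: let p, q : Fin d → ℝ be probability vectors such that (i) the number of indices i with p i ≠ 0 equals the number of indices with q i ≠ 0, (ii) ∑ i, (p i)^2 = ∑ i, (q i)^2, and (iii) for all 0 < α < β, S α p - S β p ≤ S α q - S β q. Then q is a permutation of p: there exists σ : Equiv.Perm (Fin d) with q i = p (σ i) for all i. -/
/-!
Equal purity fixes `S 2`, and equal rank fixes the limit `log (rank)` of `S α` as `α → 0⁺`.
The spread hypothesis says exactly that `α ↦ S α p - S α q` is monotone on `(0, ∞)`, so it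
vanishes on `(0, 2]`, whence `∑ pᵢ ^ α = ∑ qᵢ ^ α` for `α ∈ (0, 1)`. With `γ = 1 / (2d + 1)` and
`α = kγ` for `k ≤ 2d`, the vectors `p ^ γ` and `q ^ γ` share their first `2d` power sums; a
Vandermonde argument over their at most `2d` distinct values shows they have the same multiset
of entries, and hence so do `p` and `q`.
-/

/-- Rényi entropy of a probability vector `p` on `Fin d`
(Shannon entropy at `α = 1`; powers are `Real.rpow`). -/
noncomputable def S {d : ℕ} (α : ℝ) (p : Fin d → ℝ) : ℝ :=
  if α = 1 then -(∑ i, p i * Real.log (p i))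
  else (1 - α)⁻¹ * Real.log (∑ i, (p i) ^ α)

open Finset Filter Topology Set

theorem Multiset.sum_map_eq_sum_count_mul {R : Type*} [CommSemiring R] [DecidableEq R]
    {s : Multiset R} {T : Finset R} (hT : s.toFinset ⊆ T) (f : R → R) :
    (s.map f).sum = ∑ u ∈ T, (s.count u : R) * f u := by
  rw [Finset.sum_multiset_map_count, Finset.sum_subset hT fun u _ hu => ?_]
  · simp only [nsmul_eq_mul]
  · rw [Multiset.count_eq_zero_of_notMem (by simpa using hu), zero_smul]

theorem Multiset.eq_of_sum_map_pow_eq {R : Type*} [CommRing R] [IsDomain R] [CharZero R]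
    [DecidableEq R] {s t : Multiset R}
    (h : ∀ k < card s + card t, (s.map (· ^ k)).sum = (t.map (· ^ k)).sum) : s = t := by
  set T := s.toFinset ∪ t.toFinset
  set c : R → R := fun u => (s.count u : R) - t.count u
  have hc : ∀ k < #T, ∑ u ∈ T, c u * u ^ k = 0 := fun k hk => by
    have hk' : k < card s + card t := hk.trans_le <| (Finset.card_union_le _ _).trans <|
      add_le_add (toFinset_card_le s) (toFinset_card_le t)
    simp only [c, sub_mul, sum_sub_distrib]
    rw [← sum_map_eq_sum_count_mul subset_union_left (· ^ k),
      ← sum_map_eq_sum_count_mul subset_union_right (· ^ k), h k hk', sub_self]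
  have hcT : ∀ u ∈ T, c u = 0 := by
    set v : Fin #T → R := fun j => T.equivFin.symm j
    have hv : Function.Injective v := Subtype.val_injective.comp T.equivFin.symm.injective
    have hzero : (fun j => c (v j)) = 0 := Matrix.eq_zero_of_forall_pow_sum_mul_pow_eq_zero hv
      fun k => by
        rw [← hc k k.isLt, ← sum_coe_sort T]
        exact Fintype.sum_equiv T.equivFin.symm _ _ fun _ => rfl
    intro u hu
    simpa [v] using congrFun hzero (T.equivFin ⟨u, hu⟩)
  ext u
  by_cases hu : u ∈ T
  · exact_mod_cast sub_eq_zero.mp (hcT u hu)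
  · simp only [T, Finset.mem_union, Multiset.mem_toFinset, not_or] at hu
    rw [Multiset.count_eq_zero_of_notMem hu.1, Multiset.count_eq_zero_of_notMem hu.2]

theorem Fintype.exists_perm_of_map_univ_val_eq {ι α : Type*} [Fintype ι] {f g : ι → α}
    (h : univ.val.map f = univ.val.map g) : ∃ σ : Equiv.Perm ι, ∀ i, g i = f (σ i) := by
  classical
  have hfiber : ∀ c, Fintype.card {i // g i = c} = Fintype.card {i // f i = c} := fun c => by
    have := congrArg (Multiset.count c) h
    simp only [Multiset.count_map, Fintype.card_subtype, eq_comm (a := c)] at this ⊢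
    exact this.symm
  exact ⟨Equiv.ofFiberEquiv fun c => Fintype.equivOfCardEq (hfiber c),
    fun i => (Equiv.ofFiberEquiv_map _ i).symm⟩

theorem map_univ_val_eq_of_sum_rpow_eq {ι : Type*} [Fintype ι] {p q : ι → ℝ}
    (hp0 : ∀ i, 0 ≤ p i) (hq0 : ∀ i, 0 ≤ q i)
    (h : ∀ α ∈ Ioo (0 : ℝ) 1, ∑ i, p i ^ α = ∑ i, q i ^ α) :
    univ.val.map p = univ.val.map q := by
  classical
  set γ : ℝ := (2 * Fintype.card ι + 1)⁻¹
  have hγ : 0 < γ := by positivity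
  have hpow_sum : ∀ {r : ι → ℝ}, (∀ i, 0 ≤ r i) → ∀ k : ℕ,
      ((univ.val.map (r · ^ γ)).map (· ^ k)).sum = ∑ i, r i ^ (γ * k) := fun hr k => by
    simp only [Multiset.map_map, Function.comp_def, sum_map_val, Real.rpow_mul_natCast (hr _)]
  have hγ_pow : univ.val.map (p · ^ γ) = univ.val.map (q · ^ γ) :=
    Multiset.eq_of_sum_map_pow_eq fun k hk => by
      rw [hpow_sum hp0, hpow_sum hq0]
      rcases k.eq_zero_or_pos with rfl | hk0
      · simp
      refine h _ ⟨by positivity, ?_⟩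
      simp only [Multiset.card_map, card_val, card_univ] at hk
      rw [← div_eq_inv_mul, div_lt_one (by positivity)]
      exact_mod_cast (by omega : k < 2 * Fintype.card ι + 1)
  have hroot : ∀ {r : ι → ℝ}, (∀ i, 0 ≤ r i) →
      (univ.val.map (r · ^ γ)).map (· ^ γ⁻¹) = univ.val.map r := fun hr => by
    simp only [Multiset.map_map, Function.comp_def, Real.rpow_rpow_inv (hr _) hγ.ne']
  rw [← hroot hp0, ← hroot hq0, hγ_pow]

theorem MonotoneOn.eq_zero_of_tendsto_nhdsGT_zero {f : ℝ → ℝ} (hf : MonotoneOn f (Ioi 0))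
    (hlim : Tendsto f (𝓝[>] 0) (𝓝 0)) {b : ℝ} (hb : f b = 0) {α : ℝ}
    (hα : α ∈ Ioc 0 b) : f α = 0 := by
  refine le_antisymm (hb ▸ hf hα.1 (hα.1.trans_le hα.2) hα.2) (le_of_tendsto hlim ?_)
  filter_upwards [Ioo_mem_nhdsGT hα.1] with β hβ
  exact hf hβ.1 hα.1 hβ.2.le

theorem sum_rpow_pos {ι : Type*} [Fintype ι] {p : ι → ℝ} (hp0 : ∀ i, 0 ≤ p i)
    (hp1 : ∑ i, p i = 1) (α : ℝ) : 0 < ∑ i, p i ^ α := by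
  obtain ⟨i, -, hi⟩ := exists_ne_zero_of_sum_ne_zero (hp1.trans_ne one_ne_zero)
  exact sum_pos' (fun j _ => Real.rpow_nonneg (hp0 j) α)
    ⟨i, mem_univ i, Real.rpow_pos_of_pos ((hp0 i).lt_of_ne' hi) α⟩

theorem tendsto_sum_rpow_nhdsGT_zero {ι : Type*} [Fintype ι] (p : ι → ℝ) :
    Tendsto (fun α : ℝ => ∑ i, p i ^ α) (𝓝[>] 0) (𝓝 #{i | p i ≠ 0}) := by
  rw [card_filter, Nat.cast_sum]
  refine tendsto_finsetSum _ fun i _ => ?_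
  by_cases hi : p i = 0
  · simp only [hi, ne_eq, not_true_eq_false, if_false, Nat.cast_zero]
    exact tendsto_const_nhds.congr' <| eventually_nhdsWithin_of_forall fun α hα =>
      (Real.zero_rpow (ne_of_gt hα)).symm
  · simpa [hi] using
      (Real.continuousAt_const_rpow (b := 0) hi).tendsto.mono_left nhdsWithin_le_nhds

theorem S_of_ne_one {d : ℕ} {α : ℝ} (hα : α ≠ 1) (p : Fin d → ℝ) :
    S α p = (1 - α)⁻¹ * Real.log (∑ i, p i ^ α) :=
  if_neg hα

theorem tendsto_S_nhdsGT_zero {d : ℕ} {p : Fin d → ℝ} (hp1 : ∑ i, p i = 1) :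
    Tendsto (fun α => S α p) (𝓝[>] 0) (𝓝 (Real.log #{i | p i ≠ 0})) := by
  have hrank : (#{i | p i ≠ 0} : ℝ) ≠ 0 := by
    obtain ⟨i, -, hi⟩ := exists_ne_zero_of_sum_ne_zero (hp1.trans_ne one_ne_zero)
    exact Nat.cast_ne_zero.mpr (card_ne_zero.mpr ⟨i, by simpa using hi⟩)
  have hpre : Tendsto (fun α : ℝ => (1 - α)⁻¹) (𝓝[>] 0) (𝓝 1) := by
    simpa using ((continuous_const.sub continuous_id).tendsto' (0 : ℝ) 1 (by simp)).inv₀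
      one_ne_zero |>.mono_left nhdsWithin_le_nhds
  have hlog := (Real.continuousAt_log hrank).tendsto.comp (tendsto_sum_rpow_nhdsGT_zero p)
  refine (one_mul (Real.log _) ▸ hpre.mul hlog).congr' ?_
  filter_upwards [Ioo_mem_nhdsGT one_pos] with α hα
  exact (S_of_ne_one hα.2.ne p).symm

theorem sum_rpow_eq_of_S_eq {d : ℕ} {p q : Fin d → ℝ} {α : ℝ} (hα : α ≠ 1)
    (hp : 0 < ∑ i, p i ^ α) (hq : 0 < ∑ i, q i ^ α) (h : S α p = S α q) :
    ∑ i, p i ^ α = ∑ i, q i ^ α := by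
  rw [S_of_ne_one hα, S_of_ne_one hα] at h
  exact Real.log_injOn_pos hp hq <|
    mul_left_cancel₀ (inv_ne_zero (sub_ne_zero.mpr hα.symm)) h

/-- Rank obstruction on a fixed iso-purity manifold. -/
theorem rank_obstruction_iso_purity {d : ℕ} (p q : Fin d → ℝ)
    (hp0 : ∀ i, 0 ≤ p i) (hp1 : ∑ i, p i = 1)
    (hq0 : ∀ i, 0 ≤ q i) (hq1 : ∑ i, q i = 1)
    (hrank : (Finset.univ.filter fun i => p i ≠ 0).card =
      (Finset.univ.filter fun i => q i ≠ 0).card)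
    (hpur : ∑ i, (p i) ^ 2 = ∑ i, (q i) ^ 2)
    (hspread : ∀ α β : ℝ, 0 < α → α < β → S α p - S β p ≤ S α q - S β q) :
    ∃ σ : Equiv.Perm (Fin d), ∀ i, q i = p (σ i) := by
  have hS (α : ℝ) (hα : α ∈ Ioc (0 : ℝ) 2) : S α p - S α q = 0 := by
    refine MonotoneOn.eq_zero_of_tendsto_nhdsGT_zero (f := fun α => S α p - S α q) ?_ ?_ ?_ hα
    · intro a ha b _ hab
      rcases hab.eq_or_lt with rfl | hlt
      · exact le_rfl
      · linarith [hspread a b ha hlt]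
    · simpa [hrank] using (tendsto_S_nhdsGT_zero hp1).sub (tendsto_S_nhdsGT_zero hq1)
    · simp only [S_of_ne_one (by norm_num : (2 : ℝ) ≠ 1), Real.rpow_two, hpur, sub_self]
  have hsum (α : ℝ) (hα : α ∈ Ioo (0 : ℝ) 1) : ∑ i, p i ^ α = ∑ i, q i ^ α :=
    sum_rpow_eq_of_S_eq hα.2.ne (sum_rpow_pos hp0 hp1 α) (sum_rpow_pos hq0 hq1 α)
      (sub_eq_zero.mp (hS α ⟨hα.1, by linarith [hα.2]⟩))
  exact Fintype.exists_perm_of_map_univ_val_eq (map_univ_val_eq_of_sum_rpow_eq hp0 hq0 hsum)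
end

section
/- Iso-purity sign structure of antiflat majorization: let p, q : Fin d → ℝ be probability vectors with ∑ i, (p i)^2 = ∑ i, (q i)^2, and suppose that for all 0 < α < β one has S α p - S β p ≤ S α q - S β q. Then S α q ≥ S α p for every α with 0 < α < 2, and S α q ≤ S α p for every α > 2. -/
/-- Iso-purity sign structure of antiflat majorization. -/
theorem iso_purity_sign_structure {d : ℕ} (p q : Fin d → ℝ)
    (hp0 : ∀ i, 0 ≤ p i) (hp1 : ∑ i, p i = 1)
    (hq0 : ∀ i, 0 ≤ q i) (hq1 : ∑ i, q i = 1)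
    (hpur : ∑ i, (p i) ^ 2 = ∑ i, (q i) ^ 2)
    (hspread : ∀ α β : ℝ, 0 < α → α < β → S α p - S β p ≤ S α q - S β q) :
    (∀ α : ℝ, 0 < α → α < 2 → S α p ≤ S α q) ∧ (∀ α : ℝ, 2 < α → S α q ≤ S α p) := by
  have hS2 : S 2 p = S 2 q := by
    have hrw : ∀ r : Fin d → ℝ, (∑ i, (r i) ^ (2:ℝ)) = ∑ i, (r i) ^ 2 := by
      intro r
      refine Finset.sum_congr rfl fun i _ => ?_
      rw [show (2:ℝ) = ((2:ℕ):ℝ) by norm_num, Real.rpow_natCast]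
    simp only [S, if_neg (by norm_num : (2:ℝ) ≠ 1), hrw, hpur]
  constructor
  · intro α hα hα2
    have := hspread α 2 hα hα2
    linarith
  · intro α hα
    have := hspread 2 α (by norm_num) hα
    linarith
end

section
/- Rigidity of the antiflat order for binary spectra: let r ∈ (1/2, 1) and x ∈ [1/2, 1]. If for all 0 < α < β one has Sb α x - Sb β x ≥ Sb α r - Sb β r (the binary spectrum (x, 1-x) antiflat-majorizes the target (r, 1-r)), then x = r. -/
/-!
The hypothesis says that `α ↦ Sb α x - Sb α r` is antitone on `(0, ∞)`. At infinity it tends to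
`log r - log x` (difference of min-entropies), so it stays above that value; for `α > 1` this
forces `log x ≤ log r + log (1 + ((1 - r) / r) ^ α)`, and letting `α → ∞` gives `x ≤ r`.
At `0` it tends to `log 2 - log 2 = 0`, so `Sb 2 x ≤ Sb 2 r`, and the collision entropy `Sb 2`
is strictly decreasing on `[1/2, 1]`, giving `r ≤ x`.
-/

/-- Rényi entropy of the binary probability vector `(x, 1 - x)`
(Shannon entropy at `α = 1`; powers are `Real.rpow`). -/
noncomputable def Sb (α x : ℝ) : ℝ :=
  if α = 1 then -(x * Real.log x + (1 - x) * Real.log (1 - x))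
  else (1 - α)⁻¹ * Real.log (x ^ α + (1 - x) ^ α)

open Real Filter Topology Set

lemma Sb_of_ne_one {α : ℝ} (t : ℝ) (hα : α ≠ 1) :
    Sb α t = (1 - α)⁻¹ * log (t ^ α + (1 - t) ^ α) := by
  simp [Sb, hα]

lemma Sb_zero (t : ℝ) : Sb 0 t = log 2 := by
  rw [Sb_of_ne_one t zero_ne_one]
  norm_num

lemma Sb_two (t : ℝ) : Sb 2 t = -log (t ^ 2 + (1 - t) ^ 2) := by
  rw [Sb_of_ne_one t (by norm_num)]
  norm_cast
  norm_num

/-- For `t ≥ 1/2`, `-log t` is the min-entropy `Sb ∞ t`, and the fraction is the gap to it. -/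
lemma Sb_eq_neg_log_add {α t : ℝ} (ht₀ : 0 < t) (ht₁ : t ≤ 1) (hα : α ≠ 1) :
    Sb α t = -log t + (log t + log (1 + ((1 - t) / t) ^ α)) / (1 - α) := by
  have h1t : 0 ≤ 1 - t := by linarith
  have hsplit : t ^ α + (1 - t) ^ α = t ^ α * (1 + ((1 - t) / t) ^ α) := by
    rw [div_rpow h1t ht₀.le, mul_add, mul_div_cancel₀ _ (rpow_pos_of_pos ht₀ α).ne', mul_one]
  have hpos : 0 < 1 + ((1 - t) / t) ^ α := by
    have := rpow_nonneg (div_nonneg h1t ht₀.le) α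
    linarith
  have hα' : 1 - α ≠ 0 := sub_ne_zero.2 hα.symm
  rw [Sb_of_ne_one t hα, hsplit, log_mul (rpow_pos_of_pos ht₀ α).ne' hpos.ne', log_rpow ht₀]
  field_simp
  ring

lemma log_one_add_rpow_nonneg {u : ℝ} (hu : 0 ≤ u) (α : ℝ) : 0 ≤ log (1 + u ^ α) :=
  log_nonneg (le_add_of_nonneg_right (rpow_nonneg hu α))

lemma log_one_add_rpow_le_log_two {u α : ℝ} (hu₀ : 0 ≤ u) (hu₁ : u ≤ 1) (hα : 0 ≤ α) :
    log (1 + u ^ α) ≤ log 2 := by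
  have hle : u ^ α ≤ 1 := rpow_le_one hu₀ hu₁ hα
  have hpos : 0 < 1 + u ^ α := by linarith [rpow_nonneg hu₀ α]
  exact log_le_log hpos (by linarith)

lemma tendsto_log_one_add_rpow_atTop {u : ℝ} (hu₀ : -1 < u) (hu₁ : u < 1) :
    Tendsto (fun α : ℝ => log (1 + u ^ α)) atTop (𝓝 0) := by
  simpa using ((tendsto_rpow_atTop_of_base_lt_one u hu₀ hu₁).const_add 1).log (by norm_num)

lemma tendsto_Sb_atTop {t : ℝ} (ht : t ∈ Icc (1 / 2 : ℝ) 1) :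
    Tendsto (fun α => Sb α t) atTop (𝓝 (-log t)) := by
  obtain ⟨ht₀, ht₁⟩ := ht
  have htpos : 0 < t := by linarith
  have hu₀ : 0 ≤ (1 - t) / t := div_nonneg (by linarith) htpos.le
  have hu₁ : (1 - t) / t ≤ 1 := by rw [div_le_one htpos]; linarith
  set C := |log t| + log 2
  have hgap : Tendsto (fun α => (log t + log (1 + ((1 - t) / t) ^ α)) / (1 - α)) atTop (𝓝 0) := by
    refine squeeze_zero_norm' (a := fun α => C / (α - 1)) ?_
      (tendsto_const_nhds.div_atTop (tendsto_atTop_add_const_right _ (-1) tendsto_id))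
    filter_upwards [eventually_gt_atTop 1] with α hα
    have hT₀ := log_one_add_rpow_nonneg hu₀ α
    have hT₁ := log_one_add_rpow_le_log_two hu₀ hu₁ (by linarith : (0 : ℝ) ≤ α)
    rw [norm_div, Real.norm_eq_abs, Real.norm_eq_abs, abs_of_neg (by linarith : 1 - α < 0),
      neg_sub]
    gcongr
    exact (abs_add_le _ _).trans (by rw [abs_of_nonneg hT₀]; linarith)
  have := hgap.const_add (-log t)
  rw [add_zero] at this
  refine this.congr' ?_
  filter_upwards [eventually_gt_atTop 1] with α hα
  rw [Sb_eq_neg_log_add htpos ht₁ hα.ne']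

lemma continuousAt_Sb_zero {t : ℝ} (ht₀ : t ≠ 0) (ht₁ : t ≠ 1) :
    ContinuousAt (fun α => Sb α t) 0 := by
  have hformula : ContinuousAt (fun α : ℝ => (1 - α)⁻¹ * log (t ^ α + (1 - t) ^ α)) 0 := by
    refine ((continuousAt_const.sub continuousAt_id).inv₀ (by norm_num)).mul
      (ContinuousAt.log ((continuousAt_const_rpow ht₀).add
        (continuousAt_const_rpow (sub_ne_zero.2 ht₁.symm))) (by norm_num))
  refine hformula.congr_of_eventuallyEq ?_
  filter_upwards [eventually_ne_nhds (zero_ne_one : (0 : ℝ) ≠ 1)] with α hα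
  exact Sb_of_ne_one t hα

lemma strictAntiOn_Sb_two : StrictAntiOn (Sb 2) (Ici (1 / 2)) := by
  intro a ha b hb hab
  simp only [mem_Ici] at ha hb
  rw [Sb_two, Sb_two, neg_lt_neg_iff]
  exact log_lt_log (by positivity) (by nlinarith)

lemma le_of_forall_Sb_add_log_le {r x : ℝ} (hr : r ∈ Ioo (1 / 2 : ℝ) 1) (hx₀ : 0 < x)
    (hx₁ : x ≤ 1) (h : ∀ α, 1 < α → Sb α r + log r ≤ Sb α x + log x) : x ≤ r := by
  obtain ⟨hr_half, hr₁⟩ := hr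
  have hr₀ : 0 < r := by linarith
  have hu₁ : (1 - r) / r < 1 := by rw [div_lt_one hr₀]; linarith
  have hu₀ : -1 < (1 - r) / r := by linarith [div_pos (by linarith : 0 < 1 - r) hr₀]
  have hbound : ∀ α : ℝ, 1 < α → log x ≤ log r + log (1 + ((1 - r) / r) ^ α) := by
    intro α hα
    have hgap := h α hα
    rw [Sb_eq_neg_log_add hr₀ hr₁.le hα.ne', Sb_eq_neg_log_add hx₀ hx₁ hα.ne'] at hgap
    have hgap' : (log r + log (1 + ((1 - r) / r) ^ α)) / (1 - α) ≤
        (log x + log (1 + ((1 - x) / x) ^ α)) / (1 - α) := by linarith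
    rw [div_le_div_right_of_neg (by linarith)] at hgap'
    linarith [log_one_add_rpow_nonneg (div_nonneg (by linarith : 0 ≤ 1 - x) hx₀.le) α]
  have hlim := (tendsto_log_one_add_rpow_atTop hu₀ hu₁).const_add (log r)
  rw [add_zero] at hlim
  have hlog : log x ≤ log r :=
    ge_of_tendsto hlim ((eventually_gt_atTop 1).mono hbound)
  exact (log_le_log_iff hx₀ hr₀).1 hlog

/-- Rigidity of the antiflat order for binary spectra. -/
theorem binary_antiflat_rigidity (r x : ℝ)
    (hr : r ∈ Set.Ioo (1 / 2 : ℝ) 1) (hx : x ∈ Set.Icc (1 / 2 : ℝ) 1)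
    (h : ∀ α β : ℝ, 0 < α → α < β → Sb α r - Sb β r ≤ Sb α x - Sb β x) :
    x = r := by
  have hr' : r ∈ Icc (1 / 2 : ℝ) 1 := Ioo_subset_Icc_self hr
  have hx₀ : 0 < x := by linarith [hx.1]
  have hD_atTop := (tendsto_Sb_atTop hx).sub (tendsto_Sb_atTop hr')
  have hxr : x ≤ r := by
    refine le_of_forall_Sb_add_log_le hr hx₀ hx.2 fun α hα => ?_
    have := le_of_tendsto (b := Sb α x - Sb α r) hD_atTop
      ((eventually_gt_atTop α).mono fun β hβ => by linarith [h α β (by linarith) hβ])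
    linarith
  -- `x ≠ 1` is needed here, since `α ↦ Sb α 1` jumps from `log 2` to `0` at `α = 0`.
  have hD_zero : Tendsto (fun α => Sb α x - Sb α r) (𝓝[>] 0) (𝓝 (Sb 0 x - Sb 0 r)) :=
    ((continuousAt_Sb_zero hx₀.ne' (hxr.trans_lt hr.2).ne).sub
      (continuousAt_Sb_zero (hr'.1.trans_lt' one_half_pos).ne' hr.2.ne)).tendsto.mono_left
      nhdsWithin_le_nhds
  have hD_two : Sb 2 x - Sb 2 r ≤ Sb 0 x - Sb 0 r :=
    ge_of_tendsto hD_zero (eventually_of_mem (Ioo_mem_nhdsGT two_pos)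
      fun α hα => by linarith [h α 2 hα.1 hα.2])
  rw [Sb_zero, Sb_zero, sub_self, sub_nonpos] at hD_two
  exact hxr.antisymm ((strictAntiOn_Sb_two.le_iff_ge hx.1 hr'.1).1 hD_two)
end

section
/- Strict monotonicity of the binary Rényi entropy: for every α > 0, the function x ↦ Sb α x is strictly decreasing on the closed interval [1/2, 1] (StrictAntiOn (Sb α) (Set.Icc (1/2 : ℝ) 1)). -/
/-!
Up to a strictly monotone outer map (`log`, then multiplication by `(1 - α)⁻¹`), `Sb α x` is
`φ x + φ (1 - x)` with `φ = negMulLog` at `α = 1` and `φ x = x ^ α` otherwise; `φ` is strictly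
concave for `α ≤ 1` and strictly convex for `α > 1`, matching the sign of `1 - α`. For a strictly
convex `φ` the symmetric sum is strictly increasing on `[1/2, 1]`: for `1/2 ≤ x < y ≤ 1` the points
`x` and `1 - x` are mirror-image convex combinations of `y` and `1 - y`.
-/
open Real Set

section SymmetricSum

variable {c : ℝ} {f : ℝ → ℝ}

theorem StrictConvexOn.strictMonoOn_add_comp_sub (hf : StrictConvexOn ℝ (Icc 0 c) f) :
    StrictMonoOn (fun x => f x + f (c - x)) (Icc (c / 2) c) := by
  rintro x ⟨hcx, -⟩ y ⟨hcy, hyc⟩ hxy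
  have hd : 0 < 2 * y - c := by linarith
  set a := (x + y - c) / (2 * y - c) with ha_def
  set b := (y - x) / (2 * y - c) with hb_def
  have ha : 0 < a := div_pos (by linarith) hd
  have hb : 0 < b := div_pos (by linarith) hd
  have hab : a + b = 1 := by
    rw [ha_def, hb_def, ← add_div, div_eq_one_iff_eq hd.ne']; ring
  have hy : y ∈ Icc 0 c := ⟨by linarith, hyc⟩
  have hy' : c - y ∈ Icc 0 c := ⟨by linarith, by linarith⟩
  have hne : y ≠ c - y := by intro h; linarith
  have hx : a * y + b * (c - y) = x := by
    rw [ha_def, hb_def, div_mul_eq_mul_div, div_mul_eq_mul_div, ← add_div,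
      div_eq_iff hd.ne']
    ring
  have hx' : b * y + a * (c - y) = c - x := by
    rw [ha_def, hb_def, div_mul_eq_mul_div, div_mul_eq_mul_div, ← add_div,
      div_eq_iff hd.ne']
    ring
  have h₁ := hf.2 hy hy' hne ha hb hab
  have h₂ := hf.2 hy hy' hne hb ha (by rw [add_comm, hab])
  simp only [smul_eq_mul, hx, hx'] at h₁ h₂
  show f x + f (c - x) < f y + f (c - y)
  linear_combination h₁ + h₂ + (f y + f (c - y)) * hab

theorem StrictConcaveOn.strictAntiOn_add_comp_sub (hf : StrictConcaveOn ℝ (Icc 0 c) f) :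
    StrictAntiOn (fun x => f x + f (c - x)) (Icc (c / 2) c) := by
  intro x hx y hy hxy
  have := hf.neg.strictMonoOn_add_comp_sub hx hy hxy
  simp only [Pi.neg_apply] at this
  linarith

end SymmetricSum

theorem Sb_one_eq (x : ℝ) : Sb 1 x = negMulLog x + negMulLog (1 - x) := by
  simp only [Sb, if_true, negMulLog]
  ring

theorem Sb_eq_of_ne_one {α : ℝ} (hα : α ≠ 1) (x : ℝ) :
    Sb α x = (1 - α)⁻¹ * log (x ^ α + (1 - x) ^ α) :=
  if_neg hα

theorem rpow_add_rpow_one_sub_pos {α x : ℝ} (hx₀ : 0 < x) (hx₁ : x ≤ 1) :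
    0 < x ^ α + (1 - x) ^ α :=
  add_pos_of_pos_of_nonneg (rpow_pos_of_pos hx₀ α) (rpow_nonneg (sub_nonneg.2 hx₁) α)

/-- Strict monotonicity of the binary Rényi entropy on `[1/2, 1]`. -/
theorem binary_renyi_strictAntiOn (α : ℝ) (hα : 0 < α) :
    StrictAntiOn (Sb α) (Set.Icc (1 / 2 : ℝ) 1) := by
  rcases lt_trichotomy α 1 with hlt | rfl | hgt
  · have hpow := ((strictConcaveOn_rpow hα hlt).subset Icc_subset_Ici_self
      (convex_Icc 0 1)).strictAntiOn_add_comp_sub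
    intro x hx y hy hxy
    simp only [Sb_eq_of_ne_one hlt.ne]
    have hlog := log_lt_log (rpow_add_rpow_one_sub_pos (by linarith [hy.1]) hy.2)
      (hpow hx hy hxy)
    exact mul_lt_mul_of_pos_left hlog (inv_pos.2 (sub_pos.2 hlt))
  · intro x hx y hy hxy
    simp only [Sb_one_eq]
    exact (strictConcaveOn_negMulLog.subset Icc_subset_Ici_self
      (convex_Icc 0 1)).strictAntiOn_add_comp_sub hx hy hxy
  · have hpow := ((strictConvexOn_rpow hgt).subset Icc_subset_Ici_self
      (convex_Icc 0 1)).strictMonoOn_add_comp_sub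
    intro x hx y hy hxy
    simp only [Sb_eq_of_ne_one hgt.ne']
    have hlog := log_lt_log (rpow_add_rpow_one_sub_pos (by linarith [hx.1]) hx.2)
      (hpow hx hy hxy)
    exact mul_lt_mul_of_neg_left hlog (inv_lt_zero.2 (sub_neg.2 hgt))
end

section
/- Universal bound on the linear Rényi spread: for every d ≥ 1 and every probability vector p on Fin d, one has F p = (∑ i, (p i)^3) - (∑ i, (p i)^2)^2 < 27/256. -/
/-- The linear Rényi spread of a probability vector. -/
noncomputable def F {d : ℕ} (p : Fin d → ℝ) : ℝ :=
  (∑ i, (p i) ^ 3) - (∑ i, (p i) ^ 2) ^ 2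

/-- Universal bound on the linear Rényi spread. -/
theorem linear_renyi_spread_lt {d : ℕ} (hd : 1 ≤ d) (p : Fin d → ℝ)
    (hp0 : ∀ i, 0 ≤ p i) (hp1 : ∑ i, p i = 1) :
    F p < 27 / 256 := by
  obtain ⟨j, -, hj⟩ := Finset.exists_max_image Finset.univ p ⟨⟨0, hd⟩, Finset.mem_univ _⟩
  set m := p j with hm
  have hm0 : 0 ≤ m := hp0 j
  have hm1 : m ≤ 1 := hp1 ▸ Finset.single_le_sum (fun i _ => hp0 i) (Finset.mem_univ j)
  set r := ∑ i ∈ Finset.univ.erase j, p i ^ 2 with hrdef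
  have hsplit2 : (∑ i, p i ^ 2) = m ^ 2 + r :=
    (Finset.add_sum_erase _ (fun i => p i ^ 2) (Finset.mem_univ j)).symm
  have hr0 : 0 ≤ r := Finset.sum_nonneg fun i _ => sq_nonneg _
  have hs3 : (∑ i, p i ^ 3) ≤ m ^ 3 + m * r := by
    rw [← Finset.add_sum_erase _ (fun i => p i ^ 3) (Finset.mem_univ j), hrdef,
      Finset.mul_sum]
    gcongr with i hi
    have h1 : p i ^ 3 = p i * p i ^ 2 := by ring
    have h2 : m * p i ^ 2 = m * p i ^ 2 := rfl
    rw [h1]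
    exact mul_le_mul_of_nonneg_right (hj i (Finset.mem_univ i)) (sq_nonneg _)
  have hF : F p ≤ m ^ 3 + m * r - (m ^ 2 + r) ^ 2 := by
    unfold F
    rw [hsplit2]
    linarith
  rcases eq_or_lt_of_le hr0 with hr | hr
  · -- r = 0 : all other entries vanish, so m = 1
    have hzero : ∀ i ∈ Finset.univ.erase j, p i ^ 2 = 0 := by
      rw [← Finset.sum_eq_zero_iff_of_nonneg (fun i _ => sq_nonneg (p i))]
      exact hr.symm
    have hsum0 : ∑ i ∈ Finset.univ.erase j, p i = 0 :=
      Finset.sum_eq_zero fun i hi => pow_eq_zero_iff (by norm_num) |>.mp (hzero i hi)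
    have hm_eq : m = 1 := by
      have := (Finset.add_sum_erase _ p (Finset.mem_univ j)).symm
      rw [hp1, hsum0] at this
      linarith
    rw [hm_eq, ← hr] at hF
    norm_num at hF ⊢
    linarith
  · -- r > 0 : polynomial inequality
    have key : m ^ 3 + m * r - (m ^ 2 + r) ^ 2 < 27 / 256 := by
      rcases le_or_gt m (1/2) with hm_half | hm_half
      · nlinarith [sq_nonneg (2*r - m + 2*m^2), sq_nonneg m]
      · nlinarith [mul_nonneg (sq_nonneg (4*m - 3)) (by nlinarith [sq_nonneg m] : (0:ℝ) ≤ 16*m^2 + 8*m + 3),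
          mul_nonneg (mul_nonneg hr.le hm0) (by linarith : (0:ℝ) ≤ 2*m - 1),
          mul_pos hr hr]
    linarith
end

section
/- Faithfulness of the Rényi spread with respect to flat states: for a probability vector p on Fin d, one has S α p = S β p for all 0 < α < β if and only if p is flat, i.e., there exists c : ℝ such that for every i, p i = 0 ∨ p i = c. -/
/-- Faithfulness of the Rényi spread with respect to flat states. -/
theorem renyi_spread_faithful {d : ℕ} (p : Fin d → ℝ)
    (hp0 : ∀ i, 0 ≤ p i) (hp1 : ∑ i, p i = 1) :
    (∀ α β : ℝ, 0 < α → α < β → S α p = S β p) ↔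
      ∃ c : ℝ, ∀ i, p i = 0 ∨ p i = c := by
  -- there is a positive entry
  obtain ⟨j, hj⟩ : ∃ j, 0 < p j := by
    by_contra hcon
    push_neg at hcon
    have : ∑ i, p i = 0 := Finset.sum_eq_zero fun i _ => le_antisymm (hcon i) (hp0 i)
    simp [this] at hp1
  constructor
  · intro h
    have h23 := h 2 3 (by norm_num) (by norm_num)
    simp only [S, if_neg (by norm_num : (2:ℝ) ≠ 1), if_neg (by norm_num : (3:ℝ) ≠ 1)] at h23
    have r2 : ∀ x : ℝ, x ^ (2:ℝ) = x ^ (2:ℕ) := fun x => by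
      rw [← Real.rpow_natCast x 2]; norm_num
    have r3 : ∀ x : ℝ, x ^ (3:ℝ) = x ^ (3:ℕ) := fun x => by
      rw [← Real.rpow_natCast x 3]; norm_num
    simp only [r2, r3] at h23
    set A := ∑ i, p i ^ (2:ℕ) with hA
    set B := ∑ i, p i ^ (3:ℕ) with hB
    have hApos : 0 < A := Finset.sum_pos' (fun i _ => sq_nonneg _) ⟨j, Finset.mem_univ j, pow_pos hj 2⟩
    have hBpos : 0 < B := Finset.sum_pos' (fun i _ => pow_nonneg (hp0 i) 3) ⟨j, Finset.mem_univ j, pow_pos hj 3⟩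
    have hlog : Real.log (A ^ 2) = Real.log B := by
      rw [Real.log_pow]
      push_cast
      norm_num at h23
      linarith
    have hAB : A ^ 2 = B :=
      Real.log_injOn_pos (Set.mem_Ioi.2 (by positivity)) (Set.mem_Ioi.2 hBpos) hlog
    have key : ∑ i, ∑ j, p i * p j * (p i - p j) ^ 2 = 0 := by
      have expand : ∀ i j : Fin d, p i * p j * (p i - p j) ^ 2
          = p i ^ (3:ℕ) * p j - 2 * (p i ^ (2:ℕ) * p j ^ (2:ℕ)) + p i * p j ^ (3:ℕ) :=
        fun i j => by ring
      simp only [expand, Finset.sum_add_distrib, Finset.sum_sub_distrib,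
        ← Finset.mul_sum, ← Finset.sum_mul]
      rw [hp1, ← hA, ← hB]
      nlinarith [hAB]
    have hzero : ∀ i jj : Fin d, p i * p jj * (p i - p jj) ^ 2 = 0 := by
      intro i jj
      have h1 : ∀ i ∈ Finset.univ, (0:ℝ) ≤ ∑ j, p i * p j * (p i - p j) ^ 2 :=
        fun i _ => Finset.sum_nonneg fun j _ => mul_nonneg (mul_nonneg (hp0 i) (hp0 j)) (sq_nonneg _)
      have h2 := (Finset.sum_eq_zero_iff_of_nonneg h1).1 key i (Finset.mem_univ i)
      exact (Finset.sum_eq_zero_iff_of_nonneg (fun j _ => mul_nonneg (mul_nonneg (hp0 i) (hp0 j)) (sq_nonneg _))).1 h2 jj (Finset.mem_univ jj)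
    refine ⟨p j, fun i => ?_⟩
    have := hzero i j
    rcases mul_eq_zero.1 this with h' | h'
    · rcases mul_eq_zero.1 h' with h'' | h''
      · exact Or.inl h''
      · exact absurd h'' hj.ne'
    · right
      have := pow_eq_zero_iff (n := 2) (by norm_num) |>.1 h'
      linarith [sub_eq_zero.1 this]
  · rintro ⟨c, hc⟩ α β hα hαβ
    classical
    set T := Finset.univ.filter (fun i => p i ≠ 0) with hT
    set n := T.card with hn
    have hmemT : ∀ i ∈ T, p i = c := fun i hi => by
      rcases hc i with h0 | h0
      · exact absurd h0 (Finset.mem_filter.1 hi).2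
      · exact h0
    have hnotT : ∀ x : Fin d, x ∉ T → p x = 0 := by
      intro x hx
      by_contra hpx
      exact hx (Finset.mem_filter.2 ⟨Finset.mem_univ x, hpx⟩)
    have huniv : ∑ i, p i = ∑ i ∈ T, p i := by
      symm
      apply Finset.sum_subset (Finset.subset_univ T)
      intro x _ hx
      exact hnotT x hx
    have hnc : (n:ℝ) * c = 1 := by
      rw [← hp1, huniv, Finset.sum_congr rfl hmemT, Finset.sum_const, nsmul_eq_mul]
    have hnpos : 0 < (n:ℝ) := by
      rcases (Nat.cast_nonneg n : (0:ℝ) ≤ n).eq_or_lt with h0 | h0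
      · exfalso; rw [← h0, zero_mul] at hnc; exact zero_ne_one hnc
      · exact h0
    have hcval : c = (n:ℝ)⁻¹ := eq_inv_of_mul_eq_one_right hnc
    have hcpos : 0 < c := hcval ▸ inv_pos.2 hnpos
    have hlogc : Real.log c = -Real.log n := by rw [hcval, Real.log_inv]
    have key : ∀ γ : ℝ, 0 < γ → S γ p = Real.log n := by
      intro γ hγ
      unfold S
      split_ifs with h1
      · have hres : ∑ i, p i * Real.log (p i) = ∑ i ∈ T, p i * Real.log (p i) := by
          symm
          apply Finset.sum_subset (Finset.subset_univ T)
          intro x _ hx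
          rw [hnotT x hx]; ring
        rw [hres, Finset.sum_congr rfl (fun i hi => by rw [hmemT i hi]),
          Finset.sum_const, nsmul_eq_mul, hlogc]
        linear_combination Real.log n * hnc
      · have hres : ∑ i, p i ^ γ = ∑ i ∈ T, p i ^ γ := by
          symm
          apply Finset.sum_subset (Finset.subset_univ T)
          intro x _ hx
          rw [hnotT x hx, Real.zero_rpow hγ.ne']
        have hsum : ∑ i, p i ^ γ = (n:ℝ) * c ^ γ := by
          rw [hres, Finset.sum_congr rfl (fun i hi => by rw [hmemT i hi]),
            Finset.sum_const, nsmul_eq_mul]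
        have hne : (1:ℝ) - γ ≠ 0 := sub_ne_zero.2 (Ne.symm h1)
        rw [hsum, Real.log_mul (ne_of_gt hnpos) (ne_of_gt (Real.rpow_pos_of_pos hcpos γ)),
          Real.log_rpow hcpos, hlogc]
        field_simp
        ring
    rw [key α hα, key β (lt_trans hα hαβ)]
end

section
/- Conditional monotonicity of the linear Rényi spread: let p, q be probability vectors on Fin d. If (∑ i, (p i)^3) / (∑ i, (p i)^2)^2 ≤ (∑ i, (q i)^3) / (∑ i, (q i)^2)^2 (i.e., the Rényi spread Δ_{2,3} of p is at most that of q) and ∑ i, (p i)^2 ≤ ∑ i, (q i)^2, then F p ≤ F q. -/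
lemma sq_sum_sq_le_sum_cube {d : ℕ} (p : Fin d → ℝ)
    (hp0 : ∀ i, 0 ≤ p i) (hp1 : ∑ i, p i = 1) :
    (∑ i, (p i) ^ 2) ^ 2 ≤ ∑ i, (p i) ^ 3 := by
  have h := Finset.sum_mul_sq_le_sq_mul_sq Finset.univ
    (fun i => Real.sqrt (p i)) (fun i => Real.sqrt (p i) * p i)
  simp only [Real.sq_sqrt (hp0 _), Real.sqrt_mul_self (hp0 _)] at h ⊢
  calc (∑ i, (p i) ^ 2) ^ 2 = (∑ i, Real.sqrt (p i) * (Real.sqrt (p i) * p i)) ^ 2 := by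
        congr 1; apply Finset.sum_congr rfl; intro i _
        rw [← mul_assoc, Real.mul_self_sqrt (hp0 i)]; ring
    _ ≤ (∑ i, p i) * ∑ i, (Real.sqrt (p i) * p i) ^ 2 := h
    _ = ∑ i, (p i) ^ 3 := by
        rw [hp1, one_mul]
        apply Finset.sum_congr rfl; intro i _
        rw [mul_pow, Real.sq_sqrt (hp0 i)]; ring

lemma sum_sq_pos {d : ℕ} (p : Fin d → ℝ)
    (hp0 : ∀ i, 0 ≤ p i) (hp1 : ∑ i, p i = 1) :
    0 < ∑ i, (p i) ^ 2 := by
  by_contra h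
  push_neg at h
  have hz : ∑ i, (p i) ^ 2 = 0 :=
    le_antisymm h (Finset.sum_nonneg fun i _ => sq_nonneg _)
  have : ∀ i ∈ Finset.univ, (p i) ^ 2 = 0 :=
    (Finset.sum_eq_zero_iff_of_nonneg (fun i _ => sq_nonneg _)).mp hz
  have : ∑ i, p i = 0 := Finset.sum_eq_zero fun i _ => pow_eq_zero_iff (n := 2) (by norm_num) |>.mp (this i (Finset.mem_univ i))
  simp [hp1] at this

/-- Conditional monotonicity of the linear Rényi spread. -/
theorem linear_renyi_spread_conditional_monotone {d : ℕ} (p q : Fin d → ℝ)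
    (hp0 : ∀ i, 0 ≤ p i) (hp1 : ∑ i, p i = 1)
    (hq0 : ∀ i, 0 ≤ q i) (hq1 : ∑ i, q i = 1)
    (hspread : (∑ i, (p i) ^ 3) / (∑ i, (p i) ^ 2) ^ 2 ≤
      (∑ i, (q i) ^ 3) / (∑ i, (q i) ^ 2) ^ 2)
    (hpur : ∑ i, (p i) ^ 2 ≤ ∑ i, (q i) ^ 2) :
    F p ≤ F q := by
  set a := ∑ i, (p i) ^ 2 with ha'
  set b := ∑ i, (p i) ^ 3 with hb'
  set c := ∑ i, (q i) ^ 2 with hc'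
  set e := ∑ i, (q i) ^ 3 with he'
  have ha : 0 < a := sum_sq_pos p hp0 hp1
  have hc : 0 < c := sum_sq_pos q hq0 hq1
  have hb : a ^ 2 ≤ b := sq_sum_sq_le_sum_cube p hp0 hp1
  have he : c ^ 2 ≤ e := sq_sum_sq_le_sum_cube q hq0 hq1
  have hmul : b * c ^ 2 ≤ e * a ^ 2 := by
    exact (div_le_div_iff₀ (by positivity) (by positivity)).mp hspread
  show b - a ^ 2 ≤ e - c ^ 2
  nlinarith [mul_pos hc hc, mul_nonneg (sub_nonneg.mpr he) (sub_nonneg.mpr (pow_le_pow_left₀ ha.le hpur 2)), sq_nonneg c]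
end

section
/- Relation between logarithmic antiflatness and linear Rényi spread: for every probability vector p on Fin d (d ≥ 1), logΛ p ≤ (d : ℝ)^2 * F p. -/
/-- The logarithmic antiflatness of a probability vector. -/
noncomputable def logΛ {d : ℕ} (p : Fin d → ℝ) : ℝ :=
  Real.log (∑ i, (p i) ^ 3) - 2 * Real.log (∑ i, (p i) ^ 2)

/-- Relation between logarithmic antiflatness and the linear Rényi spread. -/
theorem log_antiflatness_le_dim_sq_mul_spread {d : ℕ} (hd : 1 ≤ d)
    (p : Fin d → ℝ) (hp0 : ∀ i, 0 ≤ p i) (hp1 : ∑ i, p i = 1) :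
    logΛ p ≤ (d : ℝ) ^ 2 * F p := by
  set S2 := ∑ i, (p i) ^ 2 with hS2
  set S3 := ∑ i, (p i) ^ 3 with hS3
  -- 1 ≤ d * S2 by Cauchy-Schwarz
  have h1 : (1 : ℝ) ≤ (d : ℝ) * S2 := by
    have := Finset.sum_mul_sq_le_sq_mul_sq Finset.univ (fun _ : Fin d => (1 : ℝ)) p
    simp [hp1] at this
    simpa [hS2, mul_comm] using this
  have hd0 : (0 : ℝ) < d := by positivity
  have hS2pos : 0 < S2 := by nlinarith
  -- S2^2 ≤ S3 by Cauchy-Schwarz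
  have hCS : S2 ^ 2 ≤ S3 := by
    have := Finset.sum_mul_sq_le_sq_mul_sq Finset.univ
      (fun i => Real.sqrt (p i)) (fun i => Real.sqrt (p i) * p i)
    have e1 : ∀ i : Fin d, Real.sqrt (p i) * (Real.sqrt (p i) * p i) = (p i) ^ 2 := by
      intro i
      rw [← mul_assoc, Real.mul_self_sqrt (hp0 i)]; ring
    have e2 : ∀ i : Fin d, (Real.sqrt (p i)) ^ 2 = p i := fun i => Real.sq_sqrt (hp0 i)
    have e3 : ∀ i : Fin d, (Real.sqrt (p i) * p i) ^ 2 = (p i) ^ 3 := by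
      intro i
      rw [mul_pow, Real.sq_sqrt (hp0 i)]; ring
    simp only [e1, e2, e3, hp1, one_mul] at this
    simpa [hS2, hS3] using this
  have hS3pos : 0 < S3 := lt_of_lt_of_le (by positivity) hCS
  have hratio : 0 < S3 / S2 ^ 2 := by positivity
  have hlog : Real.log (S3 / S2 ^ 2) ≤ S3 / S2 ^ 2 - 1 :=
    Real.log_le_sub_one_of_pos hratio
  have hlogeq : Real.log (S3 / S2 ^ 2) = Real.log S3 - 2 * Real.log S2 := by
    rw [Real.log_div (ne_of_gt hS3pos) (by positivity), Real.log_pow]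
    push_cast; ring
  have hF : 0 ≤ S3 - S2 ^ 2 := by linarith
  -- F/S2^2 ≤ d^2 F since 1/S2^2 ≤ d^2
  have hkey : S3 / S2 ^ 2 - 1 ≤ (d : ℝ) ^ 2 * (S3 - S2 ^ 2) := by
    rw [div_sub_one (by positivity), div_le_iff₀ (by positivity)]
    have hsq : (1 : ℝ) ≤ (d : ℝ) ^ 2 * S2 ^ 2 := by nlinarith
    nlinarith [mul_le_mul_of_nonneg_left hsq hF]
  calc logΛ p = Real.log (S3 / S2 ^ 2) := by rw [hlogeq]; rfl
    _ ≤ S3 / S2 ^ 2 - 1 := hlog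
    _ ≤ (d : ℝ) ^ 2 * (S3 - S2 ^ 2) := hkey
    _ = (d : ℝ) ^ 2 * F p := rfl
end

section
/- Largest-eigenvalue bound on the linear Rényi spread: for every probability vector p on Fin d (d ≥ 1), letting M be the maximum entry of p (the largest value p i), one has F p ≤ M^2 / 4. -/
/-- Largest-eigenvalue bound on the linear Rényi spread: if `M` is the maximum
entry of the probability vector `p`, then `F p ≤ M ^ 2 / 4`. -/
theorem linear_renyi_spread_le_max_sq_div_four {d : ℕ} (hd : 1 ≤ d)
    (p : Fin d → ℝ) (hp0 : ∀ i, 0 ≤ p i) (hp1 : ∑ i, p i = 1)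
    (M : ℝ) (hM : IsGreatest (Set.range p) M) :
    F p ≤ M ^ 2 / 4 := by
  have hub : ∀ i, p i ≤ M := fun i => hM.2 ⟨i, rfl⟩
  have h3 : ∑ i, p i ^ 3 ≤ M * ∑ i, p i ^ 2 := by
    rw [Finset.mul_sum]
    apply Finset.sum_le_sum
    intro i _
    have h1 := hp0 i
    have h2 := hub i
    nlinarith
  have hF : F p = (∑ i, p i ^ 3) - (∑ i, p i ^ 2) ^ 2 := rfl
  nlinarith [sq_nonneg ((∑ i, p i ^ 2) - M / 2)]
end

section
/- Sandwich bound unifying the antiflatness quantifiers: for every probability vector p on Fin d (d ≥ 1), Real.log (1 + F p) ≤ logΛ p ≤ Real.log (1 + (d : ℝ)^2 * F p). -/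
/-- Sandwich bound unifying the antiflatness quantifiers. -/
theorem log_antiflatness_sandwich {d : ℕ} (hd : 1 ≤ d)
    (p : Fin d → ℝ) (hp0 : ∀ i, 0 ≤ p i) (hp1 : ∑ i, p i = 1) :
    Real.log (1 + F p) ≤ logΛ p ∧ logΛ p ≤ Real.log (1 + (d : ℝ) ^ 2 * F p) := by
  set S2 : ℝ := ∑ i, (p i) ^ 2 with hS2
  set S3 : ℝ := ∑ i, (p i) ^ 3 with hS3
  -- Cauchy–Schwarz: S2^2 ≤ S3
  have hcs : S2 ^ 2 ≤ S3 := by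
    have := Finset.sum_sq_le_sum_mul_sum_of_sq_eq_mul (Finset.univ : Finset (Fin d))
      (r := fun i => (p i) ^ 2) (f := fun i => p i) (g := fun i => (p i) ^ 3)
      (fun i _ => hp0 i) (fun i _ => pow_nonneg (hp0 i) 3) (fun i _ => by ring)
    simpa [hp1] using this
  -- 1 ≤ d * S2
  have hdS2 : (1 : ℝ) ≤ (d : ℝ) * S2 := by
    have := sq_sum_le_card_mul_sum_sq (s := (Finset.univ : Finset (Fin d)))
      (f := fun i => p i)
    simpa [hp1] using this
  have hS2pos : 0 < S2 := by
    by_contra h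
    push_neg at h
    have hdc : (1:ℝ) ≤ (d:ℝ) := by exact_mod_cast hd
    nlinarith
  have hS3pos : 0 < S3 := lt_of_lt_of_le (by positivity) hcs
  -- each p i ≤ 1 hence S2 ≤ 1
  have hS2le1 : S2 ≤ 1 := by
    rw [hS2, ← hp1]
    apply Finset.sum_le_sum
    intro i _
    have hle : p i ≤ 1 := by
      rw [← hp1]
      exact Finset.single_le_sum (fun j _ => hp0 j) (Finset.mem_univ i)
    nlinarith [hp0 i]
  have hF0 : 0 ≤ F p := by simp only [F, ← hS2, ← hS3]; linarith
  have hFdef : F p = S3 - S2 ^ 2 := rfl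
  have hlog : logΛ p = Real.log (S3 / S2 ^ 2) := by
    rw [logΛ, Real.log_div hS3pos.ne' (by positivity), Real.log_pow]
    push_cast; ring
  constructor
  · rw [hlog]
    apply Real.log_le_log (by linarith)
    rw [le_div_iff₀ (by positivity), hFdef]
    nlinarith [mul_nonneg (sub_nonneg.2 hcs) (sub_nonneg.2 (by nlinarith : S2 ^ 2 ≤ 1))]
  · rw [hlog]
    apply Real.log_le_log (by positivity)
    rw [div_le_iff₀ (by positivity), hFdef]
    have hdcast : (1 : ℝ) ≤ (d : ℝ) := Nat.one_le_cast.mpr hd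
    nlinarith [mul_le_mul hdS2 hdS2 (by linarith) (by positivity)]
end

section
/- The capacity of entanglement as Kullback–Leibler curvature along the escort trajectory: let p be a strictly positive probability vector on Fin d. For ε ≠ 0, the Kullback–Leibler divergence from p to its escort distribution of order 1+ε (whose i-th entry is (p i)^(1+ε) / ∑ j, (p j)^(1+ε)) equals D ε = Real.log (∑ i, (p i) ^ (1+ε)) - ε * ∑ i, p i * Real.log (p i). Then the function ε ↦ (2 / ε^2) * D ε tends to V p as ε tends to 0 along nonzero values, i.e., Filter.Tendsto (fun ε => (2 / ε^2) * (Real.log (∑ i, (p i) ^ (1+ε)) - ε * ∑ i, p i * Real.log (p i))) (nhdsWithin 0 {0}ᶜ) (nhds (V p)). -/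
/-!
`K ε = log ∑ i, p i ^ (1 + ε)` is the cumulant generating function of `log p` under `p`:
`K 0 = 0`, `K' 0 = ∑ i, p i * log (p i)` and `K'' 0 = V p`. The Kullback–Leibler divergence is
`K ε - K 0 - ε K' 0`, so the limit is Taylor's formula with Peano remainder at order two, which
follows from one application of L'Hôpital's rule and the definition of `K'' 0`.
-/

/-- The capacity of entanglement (varentropy) of a strictly positive
probability vector. -/
noncomputable def V {d : ℕ} (p : Fin d → ℝ) : ℝ :=
  (∑ i, p i * (Real.log (p i)) ^ 2) - (∑ i, p i * Real.log (p i)) ^ 2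

open Filter Topology

theorem tendsto_taylor_remainder_div_sq {f f' : ℝ → ℝ} {a c : ℝ}
    (hf : ∀ᶠ x in 𝓝 a, HasDerivAt f (f' x) x) (hf' : HasDerivAt f' c a) :
    Tendsto (fun x => (f x - f a - f' a * (x - a)) / (x - a) ^ 2) (𝓝[≠] a) (𝓝 (c / 2)) := by
  refine HasDerivAt.lhopital_zero_nhdsNE (f' := fun x => f' x - f' a)
    (g' := fun x => 2 * (x - a)) ?_ ?_ ?_ ?_ ?_ ?_
  · filter_upwards [eventually_nhdsWithin_of_eventually_nhds hf] with x hx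
    simpa using (hx.sub_const (f a)).fun_sub ((hasDerivAt_id x).sub_const a |>.const_mul (f' a))
  · exact Eventually.of_forall fun x => by
      simpa using ((hasDerivAt_id x).sub_const a).fun_pow 2
  · filter_upwards [self_mem_nhdsWithin] with x hx
    exact mul_ne_zero two_ne_zero (sub_ne_zero.mpr hx)
  · refine tendsto_nhdsWithin_of_tendsto_nhds ?_
    simpa using (hf.self_of_nhds.continuousAt.tendsto.sub_const (f a)).sub
      ((tendsto_id.sub_const a).const_mul (f' a))
  · refine tendsto_nhdsWithin_of_tendsto_nhds ?_
    simpa using ((tendsto_id (x := 𝓝 a)).sub_const a).pow 2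
  · refine (hf'.tendsto_slope.div_const 2).congr' ?_
    filter_upwards [self_mem_nhdsWithin] with x hx
    rw [slope_def_field]
    field_simp [sub_ne_zero.mpr hx]

section LogMoment

variable {ι : Type*} [Fintype ι]

noncomputable def logMoment (p : ι → ℝ) (n : ℕ) (ε : ℝ) : ℝ :=
  ∑ i, p i ^ (1 + ε) * Real.log (p i) ^ n

theorem hasDerivAt_logMoment {p : ι → ℝ} (hp : ∀ i, 0 < p i) (n : ℕ) (ε : ℝ) :
    HasDerivAt (logMoment p n) (logMoment p (n + 1) ε) ε := by
  refine HasDerivAt.fun_sum fun i _ => ?_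
  exact ((((hasDerivAt_id' ε).const_add 1).const_rpow (hp i)).mul_const _).congr_deriv (by ring)

theorem logMoment_zero_right (p : ι → ℝ) (n : ℕ) :
    logMoment p n 0 = ∑ i, p i * Real.log (p i) ^ n := by
  simp [logMoment]

theorem logMoment_zero_left (p : ι → ℝ) (ε : ℝ) :
    logMoment p 0 ε = ∑ i, p i ^ (1 + ε) := by
  simp [logMoment]

end LogMoment

/-- The capacity of entanglement as Kullback–Leibler curvature along the
escort trajectory. -/
theorem capacity_as_KL_curvature {d : ℕ} (p : Fin d → ℝ)
    (hp : ∀ i, 0 < p i) (hp1 : ∑ i, p i = 1) :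
    Filter.Tendsto
      (fun ε : ℝ => (2 / ε ^ 2) *
        (Real.log (∑ i, (p i) ^ (1 + ε)) - ε * ∑ i, p i * Real.log (p i)))
      (nhdsWithin 0 {0}ᶜ) (nhds (V p)) := by
  set M := logMoment p
  have hM : ∀ n ε, HasDerivAt (M n) (M (n + 1) ε) ε := hasDerivAt_logMoment hp
  have hM0 : M 0 0 = 1 := by simp only [M, logMoment_zero_right, pow_zero, mul_one, hp1]
  have hM0_ne : ∀ᶠ ε in 𝓝 0, M 0 ε ≠ 0 :=
    (hM 0 0).continuousAt.eventually_ne (by rw [hM0]; exact one_ne_zero)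
  have hK : ∀ᶠ ε in 𝓝 0, HasDerivAt (fun x => Real.log (M 0 x)) (M 1 ε / M 0 ε) ε := by
    filter_upwards [hM0_ne] with ε hε
    exact (hM 0 ε).log hε
  have hK' := (hM 1 0).div (hM 0 0) hM0_ne.self_of_nhds
  convert (tendsto_taylor_remainder_div_sq hK hK').const_mul 2 using 2 with ε
  · simp only [M, logMoment_zero_left, logMoment_zero_right, hM0, Real.log_one, pow_one,
      div_one, sub_zero]
    ring
  · simp only [M, V, Nat.reduceAdd, logMoment_zero_right, hM0, pow_one, one_pow, mul_one, div_one]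
    ring
end
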